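/- (Exponentially damped linear bound for nonpositive initial potential.) In the model setup, assume N is nonempty, k_e(ν) ≥ k_i(μ) for all ν ∈ N and μ ∈ M, m_0 ≤ 0, and m'_0 > 0. Let ν' ∈ N attain the minimum of k_e over N. Then for every t ≥ t_0, writing Δ = t − t_0, m(t) ≤ (m_0 + m'_0·Δ)·exp(−min(k_m, k_e(ν'))·Δ). -/
import Mathlib


open Real

private lemma convexOn_exp_neg_mul (d : ℝ) :
    ConvexOn ℝ Set.univ (fun x : ℝ => Real.exp (-x * d)) := by
  refine ⟨convex_univ, ?_⟩
  intro x _ y _ a b ha hb hab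
  have h := convexOn_exp.2 (Set.mem_univ (-x * d)) (Set.mem_univ (-y * d)) ha hb hab
  simp only [smul_eq_mul] at h ⊢
  have e : -(a * x + b * y) * d = a * (-x * d) + b * (-y * d) := by ring
  rw [e]; exact h

private lemma Fnn (d : ℝ) (hd : 0 ≤ d) (a x : ℝ) :
    0 ≤ (Real.exp (-a * d) - Real.exp (-x * d)) / (x - a) := by
  rcases le_total a x with h | h
  · apply div_nonneg _ (by linarith)
    have : Real.exp (-x * d) ≤ Real.exp (-a * d) :=
      Real.exp_le_exp.2 (by nlinarith)
    linarith
  · rw [div_nonneg_iff]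
    right
    constructor
    · have : Real.exp (-a * d) ≤ Real.exp (-x * d) :=
        Real.exp_le_exp.2 (by nlinarith)
      linarith
    · linarith

private lemma Fmono (d : ℝ) (hd : 0 ≤ d) (a : ℝ) {x y : ℝ} (hx : x ≠ a) (hy : y ≠ a)
    (hxy : x ≤ y) :
    (Real.exp (-a * d) - Real.exp (-y * d)) / (y - a)
      ≤ (Real.exp (-a * d) - Real.exp (-x * d)) / (x - a) := by
  have h := (convexOn_exp_neg_mul d).secant_mono (Set.mem_univ a) (Set.mem_univ x)
      (Set.mem_univ y) hx hy hxy
  have e1 : (Real.exp (-a * d) - Real.exp (-y * d)) / (y - a)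
      = -((Real.exp (-y * d) - Real.exp (-a * d)) / (y - a)) := by ring
  have e2 : (Real.exp (-a * d) - Real.exp (-x * d)) / (x - a)
      = -((Real.exp (-x * d) - Real.exp (-a * d)) / (x - a)) := by ring
  rw [e1, e2]
  linarith

private lemma Fle_aux (d : ℝ) (hd : 0 ≤ d) {p q c : ℝ} (hc : c ≤ p) (hpq : p < q) :
    (Real.exp (-p * d) - Real.exp (-q * d)) / (q - p) ≤ d * Real.exp (-c * d) := by
  rw [div_le_iff₀ (by linarith : (0:ℝ) < q - p)]
  have h1 : Real.exp (-q * d) = Real.exp (-p * d) * Real.exp (-((q - p) * d)) := by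
    rw [← Real.exp_add]; ring_nf
  have h2 : 1 - (q - p) * d ≤ Real.exp (-((q - p) * d)) := by
    have := Real.add_one_le_exp (-((q - p) * d)); linarith
  have h3 : Real.exp (-p * d) ≤ Real.exp (-c * d) :=
    Real.exp_le_exp.2 (by nlinarith)
  have h4 : (0:ℝ) < Real.exp (-p * d) := Real.exp_pos _
  have key : Real.exp (-p * d) - Real.exp (-q * d) ≤ Real.exp (-p * d) * ((q - p) * d) := by
    rw [h1]; nlinarith
  have h5 : 0 ≤ (q - p) * d := mul_nonneg (by linarith) hd
  calc Real.exp (-p * d) - Real.exp (-q * d) ≤ Real.exp (-p * d) * ((q - p) * d) := key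
    _ ≤ Real.exp (-c * d) * ((q - p) * d) := by nlinarith
    _ = d * Real.exp (-c * d) * (q - p) := by ring

private lemma Fle (d : ℝ) (hd : 0 ≤ d) {a x c : ℝ} (hca : c ≤ a) (hcx : c ≤ x) (hax : x ≠ a) :
    (Real.exp (-a * d) - Real.exp (-x * d)) / (x - a) ≤ d * Real.exp (-c * d) := by
  rcases lt_or_gt_of_ne hax with h | h
  · have h0 := Fle_aux d hd hcx h
    rw [show Real.exp (-a * d) - Real.exp (-x * d)
        = -(Real.exp (-x * d) - Real.exp (-a * d)) by ring,
      show x - a = -(a - x) by ring, neg_div_neg_eq]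
    exact h0
  · exact Fle_aux d hd hca h



/-- Exponentially damped linear bound for nonpositive initial potential:
In the model setup, if N is nonempty, every excitatory current decays at least as fast
as every inhibitory current, ν' attains the minimum of k_e over N, m₀ ≤ 0 and m'₀ > 0,
then m(t) ≤ (m₀ + m'₀·Δ)·exp(-min(k_m, k_e(ν'))·Δ) for every t ≥ t₀, Δ = t - t₀. -/
theorem stmt_16
    (t0 m0 km : ℝ) (hkm : 0 < km)
    {N M : Type} [Fintype N] [Fintype M]
    (ke ae e0 : N → ℝ)
    (ki kj ai aj i0 j0 : M → ℝ)
    (hke : ∀ ν, 0 < ke ν) (hkem : ∀ ν, ke ν ≠ km)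
    (hae : ∀ ν, 0 < ae ν) (he0 : ∀ ν, 0 ≤ e0 ν)
    (hki : ∀ μ, 0 < ki μ) (hkij : ∀ μ, ki μ < kj μ)
    (hkim : ∀ μ, ki μ ≠ km) (hkjm : ∀ μ, kj μ ≠ km)
    (hai : ∀ μ, 0 < ai μ) (haj : ∀ μ, 0 < aj μ)
    (hi0 : ∀ μ, i0 μ ≤ 0) (hj0 : ∀ μ, j0 μ ≤ 0)
    (m : ℝ → ℝ)
    (hm : ∀ t : ℝ, m t =
      m0 * Real.exp (-km * (t - t0))
      + ∑ ν, e0 ν * (ae ν / (ke ν - km)) *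
          (Real.exp (-km * (t - t0)) - Real.exp (-ke ν * (t - t0)))
      + ∑ μ, i0 μ * (ai μ / (ki μ - km)) *
          (Real.exp (-km * (t - t0)) - Real.exp (-ki μ * (t - t0)))
      + ∑ μ, j0 μ * (ai μ / (ki μ - km)) * (aj μ / (kj μ - ki μ)) *
          ((Real.exp (-km * (t - t0)) - Real.exp (-ki μ * (t - t0)))
            - ((ki μ - km) / (kj μ - km)) *
              (Real.exp (-km * (t - t0)) - Real.exp (-kj μ * (t - t0)))))
    (m0' : ℝ)
    (hm0' : m0' = -km * m0 + ∑ ν, ae ν * e0 ν + ∑ μ, ai μ * i0 μ)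
    (hei : ∀ (ν : N) (μ : M), ki μ ≤ ke ν)
    (ν' : N) (hν' : ∀ ν, ke ν' ≤ ke ν)
    (hm0 : m0 ≤ 0) (hm0pos : 0 < m0')
    (t : ℝ) (ht : t0 ≤ t) :
    m t ≤ (m0 + m0' * (t - t0)) * Real.exp (-(min km (ke ν')) * (t - t0)) := by
  have hmt := hm t
  have hd : 0 ≤ t - t0 := sub_nonneg.2 ht
  set d : ℝ := t - t0 with hddef
  set κ : ℝ := min km (ke ν') with hκdef
  have hκm : κ ≤ km := min_le_left _ _
  have hκe' : κ ≤ ke ν' := min_le_right _ _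
  set E : ℝ := Real.exp (-κ * d) with hEdef
  set F' : ℝ := (Real.exp (-km * d) - Real.exp (-(ke ν') * d)) / (ke ν' - km) with hF'def
  have hF'nn : 0 ≤ F' := Fnn d hd km (ke ν')
  have hF'le : F' ≤ d * E := Fle d hd hκm hκe' (hkem ν')
  -- Step A : the m0 term
  have hL4 : 0 ≤ Real.exp (-km * d) - E + km * F' := by
    rcases le_total km (ke ν') with h | h
    · have hk : κ = km := min_eq_left h
      have hEe : E = Real.exp (-km * d) := by rw [hEdef, hk]
      rw [hEe]
      have := mul_nonneg hkm.le hF'nn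
      linarith
    · have hk : κ = ke ν' := min_eq_right h
      have hEe : E = Real.exp (-(ke ν') * d) := by rw [hEdef, hk]
      have hne : ke ν' - km ≠ 0 := sub_ne_zero.2 (hkem ν')
      have hmul : F' * (ke ν' - km)
          = Real.exp (-km * d) - Real.exp (-(ke ν') * d) := div_mul_cancel₀ _ hne
      have e : Real.exp (-km * d) - E + km * F' = ke ν' * F' := by
        rw [hEe]; linear_combination -hmul
      rw [e]
      exact mul_nonneg (hke ν').le hF'nn
  have hA : m0 * Real.exp (-km * d) ≤ m0 * E - km * m0 * F' := by
    nlinarith [mul_nonneg (neg_nonneg.2 hm0) hL4]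
  -- Step B : excitatory terms
  have hB : ∀ ν : N, e0 ν * (ae ν / (ke ν - km)) * (Real.exp (-km * d) - Real.exp (-ke ν * d))
      ≤ ae ν * e0 ν * F' := by
    intro ν
    have hmono := Fmono d hd km (hkem ν') (hkem ν) (hν' ν)
    have heq : e0 ν * (ae ν / (ke ν - km)) * (Real.exp (-km * d) - Real.exp (-ke ν * d))
        = ae ν * e0 ν * ((Real.exp (-km * d) - Real.exp (-ke ν * d)) / (ke ν - km)) := by
      ring
    rw [heq, hF'def]
    exact mul_le_mul_of_nonneg_left hmono (mul_nonneg (hae ν).le (he0 ν))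
  -- Step C : inhibitory i-terms
  have hC : ∀ μ : M, i0 μ * (ai μ / (ki μ - km)) * (Real.exp (-km * d) - Real.exp (-ki μ * d))
      ≤ ai μ * i0 μ * F' := by
    intro μ
    have hmono := Fmono d hd km (hkim μ) (hkem ν') (hei ν' μ)
    have heq : i0 μ * (ai μ / (ki μ - km)) * (Real.exp (-km * d) - Real.exp (-ki μ * d))
        = ai μ * i0 μ * ((Real.exp (-km * d) - Real.exp (-ki μ * d)) / (ki μ - km)) := by
      ring
    rw [heq, hF'def]
    have hnp : ai μ * i0 μ ≤ 0 := mul_nonpos_of_nonneg_of_nonpos (hai μ).le (hi0 μ)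
    exact mul_le_mul_of_nonpos_left hmono hnp
  -- Step D : inhibitory j-terms are nonpositive
  have hD : ∀ μ : M, j0 μ * (ai μ / (ki μ - km)) * (aj μ / (kj μ - ki μ)) *
      ((Real.exp (-km * d) - Real.exp (-ki μ * d))
        - ((ki μ - km) / (kj μ - km)) * (Real.exp (-km * d) - Real.exp (-kj μ * d))) ≤ 0 := by
    intro μ
    have hnik : ki μ - km ≠ 0 := sub_ne_zero.2 (hkim μ)
    have hnjk : kj μ - km ≠ 0 := sub_ne_zero.2 (hkjm μ)
    have hji : (0:ℝ) < kj μ - ki μ := sub_pos.2 (hkij μ)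
    have heq : j0 μ * (ai μ / (ki μ - km)) * (aj μ / (kj μ - ki μ)) *
        ((Real.exp (-km * d) - Real.exp (-ki μ * d))
          - ((ki μ - km) / (kj μ - km)) * (Real.exp (-km * d) - Real.exp (-kj μ * d)))
        = j0 μ * ai μ * (aj μ / (kj μ - ki μ)) *
          ((Real.exp (-km * d) - Real.exp (-ki μ * d)) / (ki μ - km)
            - (Real.exp (-km * d) - Real.exp (-kj μ * d)) / (kj μ - km)) := by
      field_simp
      try ring
      try exact Or.inl trivial
    rw [heq]
    have hmono := Fmono d hd km (hkim μ) (hkjm μ) (hkij μ).le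
    have h1 : 0 ≤ (Real.exp (-km * d) - Real.exp (-ki μ * d)) / (ki μ - km)
        - (Real.exp (-km * d) - Real.exp (-kj μ * d)) / (kj μ - km) := sub_nonneg.2 hmono
    have h2 : j0 μ * ai μ * (aj μ / (kj μ - ki μ)) ≤ 0 := by
      have hp : 0 < ai μ * (aj μ / (kj μ - ki μ)) :=
        mul_pos (hai μ) (div_pos (haj μ) hji)
      nlinarith [hj0 μ]
    nlinarith
  -- Combine everything
  calc m t = m0 * Real.exp (-km * d)
      + ∑ ν, e0 ν * (ae ν / (ke ν - km)) * (Real.exp (-km * d) - Real.exp (-ke ν * d))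
      + ∑ μ, i0 μ * (ai μ / (ki μ - km)) * (Real.exp (-km * d) - Real.exp (-ki μ * d))
      + ∑ μ, j0 μ * (ai μ / (ki μ - km)) * (aj μ / (kj μ - ki μ)) *
          ((Real.exp (-km * d) - Real.exp (-ki μ * d))
            - ((ki μ - km) / (kj μ - km)) *
              (Real.exp (-km * d) - Real.exp (-kj μ * d))) := hmt
    _ ≤ (m0 * E - km * m0 * F') + (∑ ν, ae ν * e0 ν * F')
        + (∑ μ, ai μ * i0 μ * F') + 0 := by
        refine add_le_add (add_le_add (add_le_add hA ?_) ?_) ?_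
        · exact Finset.sum_le_sum fun ν _ => hB ν
        · exact Finset.sum_le_sum fun μ _ => hC μ
        · exact Finset.sum_nonpos fun μ _ => hD μ
    _ = m0 * E + m0' * F' := by
        rw [hm0', ← Finset.sum_mul, ← Finset.sum_mul]
        ring
    _ ≤ m0 * E + m0' * (d * E) := by
        have := mul_le_mul_of_nonneg_left hF'le hm0pos.le
        linarith
    _ = (m0 + m0' * d) * E := by ring
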